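/- A universe 𝔘 of finite connected hypergraphs is of the form 𝔘_𝐑 = { 𝐑_X : X ⊆ R finite nonempty, 𝐑_X connected } for some hypergraph 𝐑 if and only if: (1) any two hypergraphs in 𝔘 with the same carrier are equal; (2) if e is a hyperedge of some 𝐇 ∈ 𝔘 and 𝐆 ∈ 𝔘 has e ⊆ G, then e is a hyperedge of 𝐆; (3) if 𝐇 ∈ 𝔘 and X ⊆ H is such that 𝐇_X is connected, then some 𝐆 ∈ 𝔘 has carrier X; (4) if 𝐇₁, 𝐇₂ ∈ 𝔘 have intersecting carriers, then there is 𝐇 ∈ 𝔘 with 𝐇₁ ∪ 𝐇₂ ⊆ 𝐇. -/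

import Mathlib

/-! Basic hypergraph notions (following Došen–Petrić / Curien–Obradović–Ivanović). -/

variable {α : Type*}

/-- `ConnIn E X`: the restriction of the edge set `E` to `X` is connected, i.e. every
nontrivial partition of `X` is crossed by an edge of `E` lying inside `X`. -/
def ConnIn (E : Set (Set α)) (X : Set α) : Prop :=
  ∀ X₁ X₂ : Set α, X₁ ∪ X₂ = X → Disjoint X₁ X₂ → X₁.Nonempty → X₂.Nonempty →
    ∃ e ∈ E, e ⊆ X ∧ ¬ e ⊆ X₁ ∧ ¬ e ⊆ X₂

/-- An atomic hypergraph: a carrier set together with a set of nonempty hyperedges covering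
the carrier and containing all singletons. -/
structure Hypergraph' (α : Type*) where
  carrier : Set α
  edges : Set (Set α)
  edges_nonempty : ∀ e ∈ edges, e.Nonempty
  edges_sub : ∀ e ∈ edges, e ⊆ carrier
  atomic : ∀ x ∈ carrier, {x} ∈ edges

/-- A subset `X` is connected in the hypergraph `G`. -/
def Hypergraph'.ConnectedIn (G : Hypergraph' α) (X : Set α) : Prop := ConnIn G.edges X

/-- The hypergraph `G` is connected. -/
def Hypergraph'.Connected (G : Hypergraph' α) : Prop := G.ConnectedIn G.carrier

/-- Restriction of a hypergraph to a subset. -/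
def Hypergraph'.restrict (G : Hypergraph' α) (X : Set α) : Hypergraph' α where
  carrier := G.carrier ∩ X
  edges := {e | e ∈ G.edges ∧ e ⊆ X}
  edges_nonempty := fun e he => G.edges_nonempty e he.1
  edges_sub := fun e he => Set.subset_inter (G.edges_sub e he.1) he.2
  atomic := fun x hx => ⟨G.atomic x hx.1, Set.singleton_subset_iff.2 hx.2⟩

/-- `Y` is a connected component of the hypergraph `G`: a maximal nonempty connected subset
of the carrier. -/
def IsCC (G : Hypergraph' α) (Y : Set α) : Prop :=
  Y.Nonempty ∧ Y ⊆ G.carrier ∧ G.ConnectedIn Y ∧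
    ∀ Z, Y ⊆ Z → Z ⊆ G.carrier → G.ConnectedIn Z → Z = Y

/-- A universe: a collection of finite connected hypergraphs with nonempty carriers. -/
def IsUniverse (U : Set (Hypergraph' α)) : Prop :=
  ∀ G ∈ U, G.carrier.Finite ∧ G.carrier.Nonempty ∧ G.Connected

/-! The forward direction is direct: restrictions of `R` are determined by their carriers, and
two connected subsets of `R` that meet have connected union. Conversely, `U` is recovered from
the union `R` of its members. By (2), each `G ∈ U` is the restriction of `R` to its carrier. A
finite connected `X ⊆ R` can be grown edge by edge inside carriers of members of `U`, using (4)
to merge the member found so far with one containing the next edge; hence `X` lies in the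
carrier of some `G₀ ∈ U`, is connected in `G₀` by (2), and is the carrier of a member of `U`
by (3). -/

open Set

section ConnIn

variable {E E' : Set (Set α)} {X X₁ X₂ Y₁ Y₂ : Set α}

theorem ConnIn.mono (h : ConnIn E X) (hE : ∀ e ∈ E, e ⊆ X → e ∈ E') : ConnIn E' X := by
  intro Y₁ Y₂ hun hdis hY₁ hY₂
  obtain ⟨e, he, heX, hcross⟩ := h Y₁ Y₂ hun hdis hY₁ hY₂
  exact ⟨e, hE e he heX, heX, hcross⟩

theorem connIn_sep_iff {Y : Set α} (hXY : X ⊆ Y) : ConnIn {e ∈ E | e ⊆ Y} X ↔ ConnIn E X :=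
  ⟨fun h => h.mono fun _ he _ => he.1, fun h => h.mono fun _ he heX => ⟨he, heX.trans hXY⟩⟩

theorem ConnIn.exists_edge_crossing (hX : ConnIn E X) (hcover : X ⊆ Y₁ ∪ Y₂)
    (hdis : Disjoint Y₁ Y₂) (h₁ : (X ∩ Y₁).Nonempty) (h₂ : (X ∩ Y₂).Nonempty) :
    ∃ e ∈ E, e ⊆ X ∧ ¬ e ⊆ Y₁ ∧ ¬ e ⊆ Y₂ := by
  obtain ⟨e, he, heX, he₁, he₂⟩ := hX (X ∩ Y₁) (X ∩ Y₂)
    (by rw [← inter_union_distrib_left, inter_eq_left.mpr hcover])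
    (hdis.mono inter_subset_right inter_subset_right) h₁ h₂
  exact ⟨e, he, heX, fun h => he₁ (subset_inter heX h), fun h => he₂ (subset_inter heX h)⟩

theorem ConnIn.union (h₁ : ConnIn E X₁) (h₂ : ConnIn E X₂) (hne : (X₁ ∩ X₂).Nonempty) :
    ConnIn E (X₁ ∪ X₂) := by
  obtain ⟨x, hx₁, hx₂⟩ := hne
  intro Y₁ Y₂ hun hdis hY₁ hY₂
  wlog hx : x ∈ Y₁ generalizing Y₁ Y₂
  · have hx' : x ∈ Y₂ := ((hun ▸ Or.inl hx₁ : x ∈ Y₁ ∪ Y₂)).resolve_left hx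
    obtain ⟨e, he, heX, he₂, he₁⟩ :=
      this Y₂ Y₁ (by rw [union_comm, hun]) hdis.symm hY₂ hY₁ hx'
    exact ⟨e, he, heX, he₁, he₂⟩
  obtain ⟨y, hy⟩ := hY₂
  have hcover : X₁ ∪ X₂ ⊆ Y₁ ∪ Y₂ := hun.ge
  rcases (hun ▸ Or.inr hy : y ∈ X₁ ∪ X₂) with hy' | hy'
  · obtain ⟨e, he, heX, hcross⟩ := h₁.exists_edge_crossing
      (subset_union_left.trans hcover) hdis ⟨x, hx₁, hx⟩ ⟨y, hy', hy⟩
    exact ⟨e, he, heX.trans subset_union_left, hcross⟩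
  · obtain ⟨e, he, heX, hcross⟩ := h₂.exists_edge_crossing
      (subset_union_right.trans hcover) hdis ⟨x, hx₂, hx⟩ ⟨y, hy', hy⟩
    exact ⟨e, he, heX.trans subset_union_right, hcross⟩

theorem ConnIn.induction_of_finite (hX : ConnIn E X) (hfin : X.Finite) {P : Set α → Prop}
    {Y₀ : Set α} (hY₀X : Y₀ ⊆ X) (hY₀ : Y₀.Nonempty) (h₀ : P Y₀)
    (grow : ∀ Y ⊆ X, P Y → ∀ e ∈ E, e ⊆ X → (e ∩ Y).Nonempty → P (Y ∪ e)) : P X := by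
  have hfinT : {Y | Y ⊆ X ∧ Y.Nonempty ∧ P Y}.Finite :=
    hfin.finite_subsets.subset fun _ hY => hY.1
  obtain ⟨Y, ⟨hYX, hYne, hPY⟩, hmax⟩ := hfinT.exists_maximal ⟨Y₀, hY₀X, hY₀, h₀⟩
  suffices hXY : X ⊆ Y from hYX.antisymm hXY ▸ hPY
  by_contra hXY
  obtain ⟨e, he, heX, heY, he_diff⟩ :=
    hX Y (X \ Y) (union_sdiff_cancel hYX) disjoint_sdiff_right hYne (sdiff_nonempty.mpr hXY)
  have hmeet : (e ∩ Y).Nonempty := by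
    by_contra h
    exact he_diff fun z hz => ⟨heX hz, fun hzY => h ⟨z, hz, hzY⟩⟩
  have hYe : Y ∪ e ⊆ Y := hmax ⟨union_subset hYX heX, hYne.mono subset_union_left,
    grow Y hYX hPY e he heX hmeet⟩ subset_union_left
  exact heY (subset_union_right.trans hYe)

end ConnIn

namespace Hypergraph'

variable {R G G' : Hypergraph' α} {X : Set α}

protected theorem ext (hcarrier : G.carrier = G'.carrier) (hedges : G.edges = G'.edges) :
    G = G' := by
  cases G; cases G'; simp_all

theorem carrier_subset_of_edges_subset (h : G.edges ⊆ G'.edges) : G.carrier ⊆ G'.carrier :=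
  fun x hx => G'.edges_sub {x} (h (G.atomic x hx)) rfl

theorem restrict_carrier (hX : X ⊆ R.carrier) : (R.restrict X).carrier = X :=
  inter_eq_right.mpr hX

theorem restrict_edges_mono {Y : Set α} (hXY : X ⊆ Y) :
    (R.restrict X).edges ⊆ (R.restrict Y).edges :=
  fun _ he => ⟨he.1, he.2.trans hXY⟩

theorem connected_restrict_iff (hX : X ⊆ R.carrier) :
    (R.restrict X).Connected ↔ R.ConnectedIn X := by
  unfold Connected ConnectedIn
  rw [restrict_carrier hX]
  exact connIn_sep_iff subset_rfl

/-- `𝔘_R`. -/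
def connectedRestrictions (R : Hypergraph' α) : Set (Hypergraph' α) :=
  {G | ∃ X : Set α, X ⊆ R.carrier ∧ X.Finite ∧ X.Nonempty ∧ (R.restrict X).Connected ∧
    G = R.restrict X}

theorem restrict_mem_connectedRestrictions (hX : X ⊆ R.carrier) (hfin : X.Finite)
    (hne : X.Nonempty) (hconn : R.ConnectedIn X) : R.restrict X ∈ R.connectedRestrictions :=
  ⟨X, hX, hfin, hne, (connected_restrict_iff hX).mpr hconn, rfl⟩

theorem carrier_injOn_connectedRestrictions : InjOn carrier R.connectedRestrictions := by
  rintro _ ⟨X₁, hX₁, -, -, -, rfl⟩ _ ⟨X₂, hX₂, -, -, -, rfl⟩ hcarrier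
  rw [restrict_carrier hX₁, restrict_carrier hX₂] at hcarrier
  rw [hcarrier]

theorem mem_edges_of_mem_connectedRestrictions (hG : G ∈ R.connectedRestrictions)
    {e : Set α} (he : e ∈ G.edges) (hG' : G' ∈ R.connectedRestrictions)
    (he' : e ⊆ G'.carrier) : e ∈ G'.edges := by
  obtain ⟨X, -, -, -, -, rfl⟩ := hG
  obtain ⟨X', hX', -, -, -, rfl⟩ := hG'
  exact ⟨he.1, restrict_carrier hX' ▸ he'⟩

theorem exists_mem_connectedRestrictions_carrier_eq (hG : G ∈ R.connectedRestrictions)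
    (hne : X.Nonempty) (hXG : X ⊆ G.carrier) (hconn : G.ConnectedIn X) :
    ∃ G' ∈ R.connectedRestrictions, G'.carrier = X := by
  obtain ⟨X₀, hX₀, hfin, -, -, rfl⟩ := hG
  rw [restrict_carrier hX₀] at hXG
  have hXR := hXG.trans hX₀
  exact ⟨R.restrict X, restrict_mem_connectedRestrictions hXR (hfin.subset hXG) hne
    ((connIn_sep_iff hXG).mp hconn), restrict_carrier hXR⟩

theorem exists_mem_connectedRestrictions_edges_superset {G₁ G₂ : Hypergraph' α}
    (hG₁ : G₁ ∈ R.connectedRestrictions) (hG₂ : G₂ ∈ R.connectedRestrictions)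
    (hmeet : (G₁.carrier ∩ G₂.carrier).Nonempty) :
    ∃ G ∈ R.connectedRestrictions, G₁.edges ⊆ G.edges ∧ G₂.edges ⊆ G.edges := by
  obtain ⟨X₁, hX₁, hfin₁, hne₁, hconn₁, rfl⟩ := hG₁
  obtain ⟨X₂, hX₂, hfin₂, -, hconn₂, rfl⟩ := hG₂
  rw [restrict_carrier hX₁, restrict_carrier hX₂] at hmeet
  rw [connected_restrict_iff hX₁] at hconn₁
  rw [connected_restrict_iff hX₂] at hconn₂
  exact ⟨R.restrict (X₁ ∪ X₂), restrict_mem_connectedRestrictions (union_subset hX₁ hX₂)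
    (hfin₁.union hfin₂) (hne₁.mono subset_union_left) (hconn₁.union hconn₂ hmeet),
    restrict_edges_mono subset_union_left, restrict_edges_mono subset_union_right⟩

def sUnion (U : Set (Hypergraph' α)) : Hypergraph' α where
  carrier := ⋃ G ∈ U, G.carrier
  edges := ⋃ G ∈ U, G.edges
  edges_nonempty e he := by
    obtain ⟨G, -, he⟩ := mem_iUnion₂.mp he
    exact G.edges_nonempty e he
  edges_sub e he := by
    obtain ⟨G, hG, he⟩ := mem_iUnion₂.mp he
    exact (G.edges_sub e he).trans (subset_biUnion_of_mem hG)
  atomic x hx := by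
    obtain ⟨G, hG, hx⟩ := mem_iUnion₂.mp hx
    exact mem_iUnion₂.mpr ⟨G, hG, G.atomic x hx⟩

variable {U : Set (Hypergraph' α)}

theorem mem_sUnion_edges {e : Set α} : e ∈ (sUnion U).edges ↔ ∃ G ∈ U, e ∈ G.edges :=
  mem_iUnion₂.trans (by simp only [exists_prop])

theorem carrier_subset_sUnion (hG : G ∈ U) : G.carrier ⊆ (sUnion U).carrier :=
  subset_biUnion_of_mem (u := carrier) hG

theorem sUnion_edges_subset_edges
    (hedges : ∀ G ∈ U, ∀ e ∈ G.edges, ∀ G' ∈ U, e ⊆ G'.carrier → e ∈ G'.edges) (hG : G ∈ U)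
    {e : Set α} (he : e ∈ (sUnion U).edges) (heG : e ⊆ G.carrier) : e ∈ G.edges := by
  obtain ⟨G', hG', he'⟩ := mem_sUnion_edges.mp he
  exact hedges G' hG' e he' G hG heG

theorem sUnion_restrict_carrier
    (hedges : ∀ G ∈ U, ∀ e ∈ G.edges, ∀ G' ∈ U, e ⊆ G'.carrier → e ∈ G'.edges) (hG : G ∈ U) :
    (sUnion U).restrict G.carrier = G :=
  Hypergraph'.ext (restrict_carrier (carrier_subset_sUnion hG)) <| Subset.antisymm
    (fun _ he => sUnion_edges_subset_edges hedges hG he.1 he.2)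
    (fun e he => ⟨mem_sUnion_edges.mpr ⟨G, hG, he⟩, G.edges_sub e he⟩)

theorem exists_mem_carrier_superset_of_connectedIn
    (hunion : ∀ G₁ ∈ U, ∀ G₂ ∈ U, (G₁.carrier ∩ G₂.carrier).Nonempty →
      ∃ G ∈ U, G₁.edges ⊆ G.edges ∧ G₂.edges ⊆ G.edges)
    (hX : X ⊆ (sUnion U).carrier) (hfin : X.Finite) (hne : X.Nonempty)
    (hconn : (sUnion U).ConnectedIn X) : ∃ G ∈ U, X ⊆ G.carrier := by
  obtain ⟨x, hx⟩ := hne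
  obtain ⟨G, hG, hxG⟩ := mem_iUnion₂.mp (hX hx)
  refine hconn.induction_of_finite (P := fun Y => ∃ G ∈ U, Y ⊆ G.carrier) hfin
    (singleton_subset_iff.mpr hx) (singleton_nonempty x) ⟨G, hG, singleton_subset_iff.mpr hxG⟩ ?_
  rintro Y - ⟨G₀, hG₀, hYG₀⟩ e he - ⟨z, hze, hzY⟩
  obtain ⟨G', hG', he'⟩ := mem_sUnion_edges.mp he
  obtain ⟨G'', hG'', h₀, h'⟩ :=
    hunion G₀ hG₀ G' hG' ⟨z, hYG₀ hzY, G'.edges_sub e he' hze⟩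
  exact ⟨G'', hG'', union_subset (hYG₀.trans (carrier_subset_of_edges_subset h₀))
    ((G'.edges_sub e he').trans (carrier_subset_of_edges_subset h'))⟩

theorem connectedRestrictions_sUnion (hU : IsUniverse U)
    (hedges : ∀ G ∈ U, ∀ e ∈ G.edges, ∀ G' ∈ U, e ⊆ G'.carrier → e ∈ G'.edges)
    (hcarrier : ∀ G ∈ U, ∀ X : Set α, X.Nonempty → X ⊆ G.carrier → G.ConnectedIn X →
      ∃ G' ∈ U, G'.carrier = X)
    (hunion : ∀ G₁ ∈ U, ∀ G₂ ∈ U, (G₁.carrier ∩ G₂.carrier).Nonempty →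
      ∃ G ∈ U, G₁.edges ⊆ G.edges ∧ G₂.edges ⊆ G.edges) :
    (sUnion U).connectedRestrictions = U := by
  ext G
  constructor
  · rintro ⟨X, hXR, hfin, hne, hconn, rfl⟩
    rw [connected_restrict_iff hXR] at hconn
    obtain ⟨G₀, hG₀, hXG₀⟩ :=
      exists_mem_carrier_superset_of_connectedIn hunion hXR hfin hne hconn
    obtain ⟨G', hG', rfl⟩ := hcarrier G₀ hG₀ X hne hXG₀
      (hconn.mono fun _ he heX => sUnion_edges_subset_edges hedges hG₀ he (heX.trans hXG₀))
    rwa [sUnion_restrict_carrier hedges hG']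
  · intro hG
    obtain ⟨hfin, hne, hconn⟩ := hU G hG
    have hrestrict := sUnion_restrict_carrier hedges hG
    exact ⟨G.carrier, carrier_subset_sUnion hG, hfin, hne, by rwa [hrestrict], hrestrict.symm⟩

end Hypergraph'

open Hypergraph'

/-- A universe `U` is of the form `𝔘_R` (all connected restrictions of a hypergraph `R` to
finite nonempty subsets) if and only if:
(1) members of `U` are determined by their carriers;
(2) a hyperedge of a member of `U` contained in the carrier of another member is a
hyperedge of that member;
(3) every nonempty connected subset of (the carrier of) a member is the carrier of a
member; and
(4) any two members with intersecting carriers are contained in a common member. -/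
theorem stmt13 (U : Set (Hypergraph' α)) (hU : IsUniverse U) :
    (∃ R : Hypergraph' α, U = {G | ∃ X : Set α, X ⊆ R.carrier ∧ X.Finite ∧ X.Nonempty ∧
        (R.restrict X).Connected ∧ G = R.restrict X}) ↔
      ((∀ G₁ ∈ U, ∀ G₂ ∈ U, G₁.carrier = G₂.carrier → G₁ = G₂) ∧
       (∀ G ∈ U, ∀ e ∈ G.edges, ∀ G' ∈ U, e ⊆ G'.carrier → e ∈ G'.edges) ∧
       (∀ G ∈ U, ∀ X : Set α, X.Nonempty → X ⊆ G.carrier → G.ConnectedIn X →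
          ∃ G' ∈ U, G'.carrier = X) ∧
       (∀ G₁ ∈ U, ∀ G₂ ∈ U, (G₁.carrier ∩ G₂.carrier).Nonempty →
          ∃ G ∈ U, G₁.edges ⊆ G.edges ∧ G₂.edges ⊆ G.edges)) := by
  change (∃ R : Hypergraph' α, U = R.connectedRestrictions) ↔ _
  constructor
  · rintro ⟨R, rfl⟩
    exact ⟨fun _ hG₁ _ hG₂ => carrier_injOn_connectedRestrictions hG₁ hG₂,
      fun _ hG _ he _ hG' => mem_edges_of_mem_connectedRestrictions hG he hG',
      fun _ hG _ hne hXG => exists_mem_connectedRestrictions_carrier_eq hG hne hXG,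
      fun _ hG₁ _ hG₂ => exists_mem_connectedRestrictions_edges_superset hG₁ hG₂⟩
  · rintro ⟨-, hedges, hcarrier, hunion⟩
    exact ⟨sUnion U, (connectedRestrictions_sUnion hU hedges hcarrier hunion).symm⟩
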